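/- Let $(\mathcal{M},\omega)$ be a compact symplectic manifold without boundary, $H, H_1,\ldots,H_m$ smooth functions, $\beta > 0$, and $p_\infty = Z^{-1} e^{-\beta H}$ with $Z = \int_{\mathcal{M}} e^{-\beta H}\,\omega^n$. Then the Fokker–Planck operator $\mathcal{L}^* g = \{g,H\} + \frac{\beta}{2}\sum_i \{g\{H,H_i\},H_i\} + \frac{1}{2}\sum_i \{\{g,H_i\},H_i\}$ annihilates $p_\infty$: $\mathcal{L}^* p_\infty = 0$. Hence the Gibbs measure $p_\infty\,\omega^n$ is invariant for the associated diffusion. -/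

import Mathlib

open MeasureTheory

/-- The canonical Poisson bracket on the symplectic vector space `ℝⁿ × ℝⁿ`
(canonical Darboux coordinates `(q, p)`). -/
noncomputable def pb {n : ℕ} (f g : (Fin n → ℝ) × (Fin n → ℝ) → ℝ)
    (z : (Fin n → ℝ) × (Fin n → ℝ)) : ℝ :=
  ∑ i : Fin n,
    (fderiv ℝ f z (Pi.single i 1, 0) * fderiv ℝ g z (0, Pi.single i 1)
      - fderiv ℝ f z (0, Pi.single i 1) * fderiv ℝ g z (Pi.single i 1, 0))

/-- The Fokker–Planck operator
`𝓛*g = {g,H} + (β/2) ∑ᵢ {g{H,Hᵢ},Hᵢ} + (1/2) ∑ᵢ {{g,Hᵢ},Hᵢ}`. -/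
noncomputable def genLstar {n m : ℕ} (β : ℝ) (H : (Fin n → ℝ) × (Fin n → ℝ) → ℝ)
    (Hi : Fin m → ((Fin n → ℝ) × (Fin n → ℝ) → ℝ))
    (g : (Fin n → ℝ) × (Fin n → ℝ) → ℝ) (z : (Fin n → ℝ) × (Fin n → ℝ)) : ℝ :=
  pb g H z + (β / 2) * ∑ i, pb (fun w => g w * pb H (Hi i) w) (Hi i) z
    + (1 / 2) * ∑ i, pb (pb g (Hi i)) (Hi i) z

lemma contDiff_pb {n : ℕ} (f g : (Fin n → ℝ) × (Fin n → ℝ) → ℝ)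
    (hf : ContDiff ℝ (⊤ : ℕ∞) f) (hg : ContDiff ℝ (⊤ : ℕ∞) g) : ContDiff ℝ (⊤ : ℕ∞) (pb f g) := by
  show ContDiff ℝ (⊤ : ℕ∞) fun z => ∑ i : Fin n,
    (fderiv ℝ f z (Pi.single i 1, 0) * fderiv ℝ g z (0, Pi.single i 1)
      - fderiv ℝ f z (0, Pi.single i 1) * fderiv ℝ g z (Pi.single i 1, 0))
  apply ContDiff.sum; intro i _
  exact (((hf.fderiv_right (by simp)).clm_apply contDiff_const).mul
      ((hg.fderiv_right (by simp)).clm_apply contDiff_const)).sub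
    (((hf.fderiv_right (by simp)).clm_apply contDiff_const).mul
      ((hg.fderiv_right (by simp)).clm_apply contDiff_const))

lemma pb_const_mul {n : ℕ} (c : ℝ) (f g : (Fin n → ℝ) × (Fin n → ℝ) → ℝ)
    (z : (Fin n → ℝ) × (Fin n → ℝ)) (hf : DifferentiableAt ℝ f z) :
    pb (fun w => c * f w) g z = c * pb f g z := by
  unfold pb
  rw [fderiv_const_mul hf c, Finset.mul_sum]
  refine Finset.sum_congr rfl fun i _ => ?_
  simp only [ContinuousLinearMap.coe_smul', Pi.smul_apply, smul_eq_mul]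
  ring

lemma pb_gibbs {n : ℕ} (β Z : ℝ) (H g : (Fin n → ℝ) × (Fin n → ℝ) → ℝ)
    (hH : ContDiff ℝ (⊤ : ℕ∞) H) (z : (Fin n → ℝ) × (Fin n → ℝ)) :
    pb (fun w => Z⁻¹ * Real.exp (-β * H w)) g z
      = (-β) * (Z⁻¹ * Real.exp (-β * H z)) * pb H g z := by
  have h1 : HasFDerivAt (fun w => -β * H w) ((-β) • fderiv ℝ H z) z :=
    ((hH.differentiable (by simp) z).hasFDerivAt).const_mul (-β)
  have h2 := (Real.hasDerivAt_exp (-β * H z)).comp_hasFDerivAt z h1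
  have h3 := h2.const_mul Z⁻¹
  have h4 : HasFDerivAt (fun w => Z⁻¹ * Real.exp (-β * H w))
      (Z⁻¹ • Real.exp (-β * H z) • (-β) • fderiv ℝ H z) z := h3
  unfold pb
  rw [h4.fderiv, Finset.mul_sum]
  refine Finset.sum_congr rfl fun i _ => ?_
  simp only [ContinuousLinearMap.coe_smul', Pi.smul_apply, smul_eq_mul]
  ring

/-- The Fokker–Planck operator annihilates the Gibbs density
`p∞ = Z⁻¹ e^{−βH}`, `Z = ∫ e^{−βH} ωⁿ`: `𝓛* p∞ = 0`.  Hence the Gibbs measure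
`p∞ ωⁿ` is invariant for the associated Langevin diffusion.  Formalized in
canonical Darboux coordinates on `ℝⁿ × ℝⁿ` (Liouville volume = Lebesgue). -/
theorem genLstar_gibbs {n m : ℕ} (β Z : ℝ) (hβ : 0 < β)
    (H : (Fin n → ℝ) × (Fin n → ℝ) → ℝ)
    (Hi : Fin m → ((Fin n → ℝ) × (Fin n → ℝ) → ℝ))
    (hH : ContDiff ℝ (⊤ : ℕ∞) H) (hHi : ∀ i, ContDiff ℝ (⊤ : ℕ∞) (Hi i))
    (hint : Integrable (fun z : (Fin n → ℝ) × (Fin n → ℝ) => Real.exp (-β * H z)))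
    (hZ : Z = ∫ z : (Fin n → ℝ) × (Fin n → ℝ), Real.exp (-β * H z)) :
    ∀ z, genLstar β H Hi (fun w => Z⁻¹ * Real.exp (-β * H w)) z = 0 := by
  intro z
  set p : (Fin n → ℝ) × (Fin n → ℝ) → ℝ := fun w => Z⁻¹ * Real.exp (-β * H w) with hp
  have hpc : ContDiff ℝ (⊤ : ℕ∞) p :=
    contDiff_const.mul (Real.contDiff_exp.comp (contDiff_const.mul hH))
  have key : ∀ (g : (Fin n → ℝ) × (Fin n → ℝ) → ℝ) (w : (Fin n → ℝ) × (Fin n → ℝ)),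
      pb p g w = (-β) * (p w * pb H g w) := by
    intro g w
    rw [hp, pb_gibbs β Z H g hH w]; ring
  unfold genLstar
  -- first term vanishes
  have t1 : pb p H z = 0 := by
    rw [key]
    have : pb H H z = 0 := by
      unfold pb
      exact Finset.sum_eq_zero fun i _ => by ring
    rw [this]; ring
  -- third term equals -β times the function inside the second term
  have t3 : ∀ i : Fin m, pb (pb p (Hi i)) (Hi i) z
      = (-β) * pb (fun w => p w * pb H (Hi i) w) (Hi i) z := by
    intro i
    have hfe : pb p (Hi i) = fun w => (-β) * (p w * pb H (Hi i) w) :=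
      funext fun w => key (Hi i) w
    rw [hfe]
    exact pb_const_mul (-β) _ (Hi i) z
      ((hpc.mul (contDiff_pb H (Hi i) hH (hHi i))).differentiable (by simp) z)
  rw [t1]
  have : ∑ i, pb (pb p (Hi i)) (Hi i) z
      = (-β) * ∑ i, pb (fun w => p w * pb H (Hi i) w) (Hi i) z := by
    rw [Finset.mul_sum]
    exact Finset.sum_congr rfl fun i _ => t3 i
  rw [this]
  ring
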